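/- Let n be an odd integer with n ≠ 1 such that 2^n − 1 is squarefree. Then there exists an irreducible λ-quiddity over the finite field with 2^n elements of size 3·(2^n − 1). In particular the maximal size of irreducible λ-quiddities over this field is at least 3·(2^n − 1). -/

import Mathlib

namespace Quiddity

variable {A : Type*} [CommRing A]

/-- `mMat [a₁, …, aₙ]` is the matrix product `[[aₙ,-1],[1,0]] ⋯ [[a₁,-1],[1,0]]`. -/
def mMat : List A → Matrix (Fin 2) (Fin 2) A
  | [] => 1
  | a :: t => mMat t * !![a, -1; 1, 0]

/-- Continuant: `cont [] = K₀ = 1`, `cont [a] = K₁(a) = a`, and the continuant recursion. -/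
def cont : List A → A
  | [] => 1
  | [a] => a
  | a :: b :: t => a * cont (b :: t) - cont t

/-- A λ-quiddity is a tuple with `Mₙ(a₁,…,aₙ) = ± Id`. -/
def IsQuiddity (l : List A) : Prop := mMat l = 1 ∨ mMat l = -1

/-- The sum `⊕` of two tuples (meaningful for tuples of length ≥ 2):
`(a₁,…,aₘ) ⊕ (b₁,…,b_l) = (a₁+b_l, a₂,…,a_{m−1}, aₘ+b₁, b₂,…,b_{l−1})`. -/
def oplus (la lb : List A) : List A :=
  (la.headD 0 + lb.getLastD 0) ::
    (la.tail.dropLast ++ (la.getLastD 0 + lb.headD 0) :: lb.tail.dropLast)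

/-- Two tuples are equivalent if one is a cyclic permutation of the other or of its
reversal. -/
def TupleEquiv (l l' : List A) : Prop :=
  List.IsRotated l l' ∨ List.IsRotated l.reverse l'

/-- A λ-quiddity `c` is reducible if `c ∼ a ⊕ b` with `b` a λ-quiddity and both of size ≥ 3. -/
def QuiddityReducible (c : List A) : Prop :=
  ∃ a b : List A, 3 ≤ a.length ∧ 3 ≤ b.length ∧ IsQuiddity b ∧ TupleEquiv c (oplus a b)

/-- `(a, b, a, b, …, a, b)` with `k` repetitions of the pair `(a, b)` (size `2k`). -/
def dynList : ℕ → A → A → List A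
  | 0, _, _ => []
  | k + 1, a, b => a :: b :: dynList k a b

/-- `(u, v, v, u, v, v, …, u, v, v)` with `k` repetitions of the block `(u, v, v)`
(size `3k`). -/
def triList : ℕ → A → A → List A
  | 0, _, _ => []
  | k + 1, a, b => a :: b :: b :: triList k a b

end Quiddity

open Quiddity

/-!
Put `q = 2ⁿ`, pick a generator `v` of `𝔽_qˣ` such that `v²` is not of the form `z² + z`, and let
`λ = v⁻¹`. In characteristic 2 the matrix `M(λ, v, v)` is upper triangular with diagonal `(λ, v)`,
so `(λ, v, v)` repeated `q − 1` times is a λ-quiddity. If it were `∼ a ⊕ b` with `b` a λ-quiddity,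
the interior of `b` would have continuant `M₀₀ = ±1 = 1` and would be, up to reversal (which
preserves the continuant), a factor of length at most `3(q − 1) − 3` of the tuple written twice.
Such a factor is `s ++ (λ, v, v)ʲ ++ p` with `s` a suffix of `(v, v)` and `p` a prefix of `(λ, v)`;
its continuant is `0`, `λᵉ` or `vᵉ` with `0 < e < q − 1`, or `vʲ⁺² + λʲ`, and the last equals `1`
only if `v² = z² + z` for `z = vʲ⁺²`.

A suitable generator exists: the image of `z ↦ z² + z` is an additive subgroup, the sum of all
generators of `𝔽_qˣ` is `μ(q − 1) = ±1 = 1` since `q − 1` is squarefree, and `z² + z = 1` would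
give an element of order 3, whereas `3 ∤ 2ⁿ − 1` for odd `n`.
-/

open scoped Matrix

theorem List.IsRotated.infix_append_self {α : Type*} {l l' : List α} (h : l ~r l') :
    l' <:+: l ++ l := by
  obtain ⟨n, rfl⟩ := h
  rw [List.rotate_eq_drop_append_take_mod]
  refine ⟨l.take (n % l.length), l.drop (n % l.length), ?_⟩
  rw [List.append_assoc, List.append_assoc, List.take_append_drop, ← List.append_assoc,
    List.take_append_drop]

namespace Quiddity

section Lists

variable {A : Type*} {a b : A}

theorem TupleEquiv.length_eq {l l' : List A} (h : TupleEquiv l l') : l'.length = l.length := by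
  rcases h with h | h
  · exact h.perm.length_eq.symm
  · rw [← h.perm.length_eq, List.length_reverse]

theorem TupleEquiv.infix_append_self {l l' t : List A} (h : TupleEquiv l l') (ht : t <:+: l') :
    t <:+: l ++ l ∨ t.reverse <:+: l ++ l := by
  rcases h with h | h
  · exact Or.inl (ht.trans h.infix_append_self)
  · refine Or.inr ?_
    simpa using (ht.trans h.infix_append_self).reverse

@[simp]
theorem triList_length (k : ℕ) (a b : A) : (triList k a b).length = 3 * k := by
  induction k with
  | zero => rfl
  | succ k ih => simp only [triList, List.length_cons, ih]; ring

theorem triList_add (m k : ℕ) (a b : A) :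
    triList (m + k) a b = triList m a b ++ triList k a b := by
  induction m with
  | zero => simp [triList]
  | succ m ih => rw [Nat.add_right_comm, triList, ih]; rfl

theorem exists_eq_of_prefix_triList {t : List A} {k : ℕ} (h : t <+: triList k a b) :
    ∃ j p, p <+: [a, b] ∧ t = triList j a b ++ p := by
  induction k generalizing t with
  | zero => exact ⟨0, [], List.nil_prefix, List.prefix_nil.mp h⟩
  | succ k ih =>
    rcases List.prefix_cons_iff.mp h with rfl | ⟨t, rfl, h₁⟩
    · exact ⟨0, [], List.nil_prefix, rfl⟩
    rcases List.prefix_cons_iff.mp h₁ with rfl | ⟨t, rfl, h₂⟩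
    · exact ⟨0, [a], by simp, rfl⟩
    rcases List.prefix_cons_iff.mp h₂ with rfl | ⟨t, rfl, h₃⟩
    · exact ⟨0, [a, b], List.prefix_rfl, rfl⟩
    obtain ⟨j, p, hp, rfl⟩ := ih h₃
    exact ⟨j + 1, p, hp, rfl⟩

theorem exists_eq_of_infix_triList {t : List A} {k : ℕ} (h : t <:+: triList k a b) :
    ∃ s j p, s <:+ [b, b] ∧ p <+: [a, b] ∧ t = s ++ triList j a b ++ p := by
  induction k with
  | zero => exact ⟨[], 0, [], List.nil_suffix, List.nil_prefix, List.eq_nil_of_infix_nil h⟩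
  | succ k ih =>
    have hnil : ∃ s j p, s <:+ [b, b] ∧ p <+: [a, b] ∧ ([] : List A) = s ++ triList j a b ++ p :=
      ⟨[], 0, [], List.nil_suffix, List.nil_prefix, rfl⟩
    rcases List.infix_cons_iff.mp h with h₁ | h₁
    · obtain ⟨j, p, hp, rfl⟩ := exists_eq_of_prefix_triList (k := k + 1) h₁
      exact ⟨[], j, p, List.nil_suffix, hp, rfl⟩
    rcases List.infix_cons_iff.mp h₁ with h₂ | h₂
    · rcases List.prefix_cons_iff.mp h₂ with rfl | ⟨t, rfl, h₃⟩
      · exact hnil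
      rcases List.prefix_cons_iff.mp h₃ with rfl | ⟨t, rfl, h₄⟩
      · exact ⟨[b], 0, [], List.suffix_cons _ _, List.nil_prefix, rfl⟩
      obtain ⟨j, p, hp, rfl⟩ := exists_eq_of_prefix_triList h₄
      exact ⟨[b, b], j, p, List.suffix_rfl, hp, rfl⟩
    rcases List.infix_cons_iff.mp h₂ with h₃ | h₃
    · rcases List.prefix_cons_iff.mp h₃ with rfl | ⟨t, rfl, h₄⟩
      · exact hnil
      obtain ⟨j, p, hp, rfl⟩ := exists_eq_of_prefix_triList h₄
      exact ⟨[b], j, p, List.suffix_cons _ _, hp, rfl⟩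
    exact ih h₃

end Lists

variable {A : Type*} [CommRing A]

@[simp]
theorem mMat_nil : mMat ([] : List A) = 1 := rfl

@[simp]
theorem mMat_cons (a : A) (l : List A) : mMat (a :: l) = mMat l * !![a, -1; 1, 0] := rfl

theorem mMat_append (l₁ l₂ : List A) : mMat (l₁ ++ l₂) = mMat l₂ * mMat l₁ := by
  induction l₁ with
  | nil => simp
  | cons a l ih => simp [ih, mul_assoc]

theorem transpose_mMat (l : List A) :
    (mMat l)ᵀ = !![1, 0; 0, -1] * mMat l.reverse * !![1, 0; 0, -1] := by
  induction l with
  | nil => ext i j; fin_cases i <;> fin_cases j <;> simp [Matrix.mul_apply, Fin.sum_univ_two]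
  | cons a l ih =>
    have hX : !![a, -1; 1, 0]ᵀ * !![1, 0; 0, -1] = !![1, 0; 0, -1] * !![a, -1; 1, 0] := by
      ext i j; fin_cases i <;> fin_cases j <;> simp [Matrix.mul_apply, Fin.sum_univ_two]
    rw [mMat_cons, Matrix.transpose_mul, ih, List.reverse_cons, mMat_append, mMat_cons, mMat_nil,
      one_mul, ← mul_assoc, ← mul_assoc, hX]
    simp only [mul_assoc]

theorem mMat_reverse_zero_zero (l : List A) : mMat l.reverse 0 0 = mMat l 0 0 := by
  rw [← Matrix.transpose_apply (mMat l), transpose_mMat]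
  simp [Matrix.mul_apply, Fin.sum_univ_two, -Matrix.cons_mul]

theorem mMat_cons_append_singleton_one_one (x y : A) (t : List A) :
    mMat (x :: (t ++ [y])) 1 1 = -mMat t 0 0 := by
  simp [mMat_append, Matrix.mul_apply, Fin.sum_univ_two, -Matrix.cons_mul]

theorem IsQuiddity.mMat_zero_zero_of_cons_append {x y : A} {t : List A}
    (h : IsQuiddity (x :: (t ++ [y]))) : mMat t 0 0 = 1 ∨ mMat t 0 0 = -1 := by
  have hentry := mMat_cons_append_singleton_one_one x y t
  rcases h with h | h <;>
    simp only [h, Matrix.one_apply_eq, Matrix.neg_apply, neg_inj] at hentry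
  · exact Or.inr (neg_eq_iff_eq_neg.mp hentry.symm)
  · exact Or.inl hentry.symm

theorem QuiddityReducible.exists_infix {c : List A} (h : QuiddityReducible c) :
    ∃ t, t <:+: c ++ c ∧ t ≠ [] ∧ t.length + 3 ≤ c.length ∧
      (mMat t 0 0 = 1 ∨ mMat t 0 0 = -1) := by
  obtain ⟨a, b, ha, hb, hq, hc⟩ := h
  obtain ⟨x, t, y, rfl⟩ : ∃ x t y, b = x :: (t ++ [y]) := by
    match b, hb with
    | x :: b', hb =>
      obtain rfl | ⟨t, y, rfl⟩ := b'.eq_nil_or_concat'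
      · simp at hb
      · exact ⟨x, t, y, rfl⟩
  have hop : oplus a (x :: (t ++ [y])) =
      (a.headD 0 + y) :: (a.tail.dropLast ++ (a.getLastD 0 + x) :: t) := by
    have hy : (x :: (t ++ [y])).getLastD 0 = y := by
      rw [← List.cons_append, List.getLastD_eq_getLast?, List.getLast?_concat]; rfl
    simp only [oplus, hy, List.headD_cons, List.tail_cons, List.dropLast_concat]
  have hsuf : t <:+: oplus a (x :: (t ++ [y])) := by
    rw [hop]
    exact (List.suffix_cons _ t |>.trans (List.suffix_append _ _) |>.trans
      (List.suffix_cons _ _)).isInfix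
  have hne : t ≠ [] := by
    rintro rfl
    simp at hb
  have hlen : t.length + 3 ≤ c.length := by
    rw [← hc.length_eq, hop]
    simp only [List.length_cons, List.length_append, List.length_dropLast, List.length_tail]
    omega
  have hq' := hq.mMat_zero_zero_of_cons_append
  rcases hc.infix_append_self hsuf with hinf | hinf
  · exact ⟨t, hinf, hne, hlen, hq'⟩
  · refine ⟨t.reverse, hinf, by simpa using hne, by simpa using hlen, ?_⟩
    rwa [mMat_reverse_zero_zero]

section CharTwo

variable [CharP A 2] {lam v : A}

theorem mMat_triList_of_mul_eq_one (hv : lam * v = 1) (j : ℕ) :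
    mMat (triList j lam v) = !![lam ^ j, v ^ (j + 1) + lam ^ j * v; 0, v ^ j] := by
  have h2 : (2 : A) = 0 := CharTwo.two_eq_zero
  induction j with
  | zero => simp [triList, Matrix.one_fin_two, CharTwo.add_self_eq_zero]
  | succ j ih =>
    simp only [triList, mMat_cons, ih]
    ext i j; fin_cases i <;> fin_cases j <;>
      simp [Matrix.mul_apply, Fin.sum_univ_two, -Matrix.cons_mul]
    · linear_combination (2 * lam ^ j * v + v ^ (j + 1)) * hv - lam ^ j * lam * h2
    · linear_combination -lam ^ j * hv - (lam ^ j * v ^ 2 + v ^ (j + 2)) * h2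
    · linear_combination v ^ j * hv
    · linear_combination -v ^ (j + 1) * h2

theorem pow_add_pow_ne_one (hv : lam * v = 1) (hAS : ∀ z : A, z ^ 2 + z ≠ v ^ 2) (j : ℕ) :
    v ^ (j + 2) + lam ^ j ≠ 1 := by
  intro h
  have hAB : lam ^ j * v ^ j = 1 := by rw [← mul_pow, hv, one_pow]
  have h2 : (2 : A) = 0 := CharTwo.two_eq_zero
  refine hAS (v ^ (j + 2)) ?_
  linear_combination (-v ^ (j + 2)) * h + v ^ 2 * hAB + v ^ (2 * j + 4) * h2

theorem mMat_append_triList_append_zero_zero_ne_one {K : ℕ} (hv : lam * v = 1)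
    (hK : K ≤ orderOf v) (hAS : ∀ z : A, z ^ 2 + z ≠ v ^ 2) {s p : List A} (hs : s <:+ [v, v])
    (hp : p <+: [lam, v]) {j : ℕ} (hne : s ++ triList j lam v ++ p ≠ [])
    (hlen : (s ++ triList j lam v ++ p).length + 3 ≤ 3 * K) :
    mMat (s ++ triList j lam v ++ p) 0 0 ≠ 1 := by
  have h2 : (2 : A) = 0 := CharTwo.two_eq_zero
  have : Nontrivial A := CharP.nontrivial_of_char_ne_one (v := 2) (by norm_num)
  have hv_pow (e : ℕ) (he : e ≠ 0) (heK : e < K) : v ^ e ≠ 1 :=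
    pow_ne_one_of_lt_orderOf he (heK.trans_le hK)
  have hlam_pow (e : ℕ) (he : e ≠ 0) (heK : e < K) : lam ^ e ≠ 1 := fun h ↦
    hv_pow e he heK (by simpa [mul_pow, h] using congrArg (· ^ e) hv)
  rw [← List.mem_tails] at hs
  rw [← List.mem_inits] at hp
  simp only [List.tails, List.inits, List.map_cons, List.map_nil, List.mem_cons,
    List.not_mem_nil, or_false] at hs hp
  -- `s` runs through `[v, v], [v], []` and `p` through `[], [lam], [lam, v]`
  rcases hs with rfl | rfl | rfl <;> rcases hp with rfl | rfl | rfl <;>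
    simp [mMat_append, mMat_triList_of_mul_eq_one hv, Matrix.mul_apply, Fin.sum_univ_two,
      -Matrix.cons_mul] at hne hlen ⊢ <;> intro h
  · exact pow_add_pow_ne_one hv hAS j (by linear_combination h + (lam ^ j - v ^ 2 * lam ^ j) * h2)
  · exact hlam_pow (j + 1) (by omega) (by omega) (by
      linear_combination h - v ^ (j + 1) * hv + (lam ^ (j + 1) - lam ^ (j + 1) * v ^ 2) * h2)
  · exact hv_pow (j + 2) (by omega) (by omega) (by
      linear_combination h + (lam ^ j - v ^ (j + 2)) * hv
        + (v ^ (j + 2) + v ^ 2 * lam ^ j - v ^ 3 * lam * lam ^ j) * h2)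
  · exact hv_pow (j + 1) (by omega) (by omega) (by linear_combination h - v * lam ^ j * h2)
  · exact zero_ne_one (by linear_combination h - v ^ j * hv - lam * lam ^ j * v * h2)
  · exact hv_pow (j + 1) (by omega) (by omega) (by
      linear_combination h - v ^ (j + 1) * hv
        + (v ^ (j + 1) + v * lam ^ j - v ^ 2 * lam * lam ^ j) * h2)
  · exact hlam_pow j (by rintro rfl; exact hne rfl) (by omega) h
  · exact hlam_pow (j + 1) (by omega) (by omega) (by linear_combination h)
  · exact zero_ne_one (by linear_combination h - lam ^ j * hv)

theorem isQuiddity_triList (hv : lam * v = 1) {K : ℕ} (hK : v ^ K = 1) :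
    IsQuiddity (triList K lam v) := by
  have hlam : lam ^ K = 1 := by simpa [mul_pow, hK] using congrArg (· ^ K) hv
  refine Or.inl ?_
  rw [mMat_triList_of_mul_eq_one hv, Matrix.one_fin_two, hK, hlam, pow_succ, hK]
  simp [CharTwo.add_self_eq_zero]

theorem not_quiddityReducible_triList (hv : lam * v = 1) {K : ℕ} (hK : K ≤ orderOf v)
    (hAS : ∀ z : A, z ^ 2 + z ≠ v ^ 2) : ¬ QuiddityReducible (triList K lam v) := by
  intro h
  obtain ⟨t, hinf, hne, hlen, ht⟩ := h.exists_infix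
  rw [← triList_add] at hinf
  obtain ⟨s, j, p, hs, hp, rfl⟩ := exists_eq_of_infix_triList hinf
  rw [triList_length] at hlen
  refine mMat_append_triList_append_zero_zero_ne_one hv hK hAS hs hp hne hlen ?_
  simpa [CharTwo.neg_eq] using ht

end CharTwo

end Quiddity

namespace FiniteField

open Finset

variable (F : Type*) [Field F] [Fintype F] [DecidableEq F]

theorem sum_units_pow_eq_one_eq_zero {d : ℕ} (hd : d ∣ Fintype.card Fˣ) (hd₁ : d ≠ 1) :
    ∑ x : Fˣ with x ^ d = 1, (x : F) = 0 := by
  classical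
  obtain ⟨q, hq, hqd⟩ := Nat.exists_prime_and_dvd hd₁
  have : Fact q.Prime := ⟨hq⟩
  obtain ⟨a, ha⟩ := exists_prime_orderOf_dvd_card q (hqd.trans hd)
  have hG : rootsOfUnity d F ≠ ⊥ := by
    refine (Subgroup.ne_bot_iff_exists_ne_one).mpr ⟨⟨a, ?_⟩, ?_⟩
    · rw [mem_rootsOfUnity, ← orderOf_dvd_iff_pow_eq_one, ha]
      exact hqd
    · intro h
      have : a = 1 := congrArg Subtype.val h
      rw [this, orderOf_one] at ha
      exact hq.one_lt.ne ha
  rw [← sum_subgroup_units_eq_zero hG]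
  exact Finset.sum_subtype _ (by simp [mem_rootsOfUnity]) _

theorem sum_units_orderOf_eq_card_units :
    ∑ x : Fˣ with orderOf x = Fintype.card Fˣ, (x : F) =
      ArithmeticFunction.moebius (Fintype.card Fˣ) := by
  have hdiv : ∀ d > 0, d ∈ {m | m ∣ Fintype.card Fˣ} →
      ∑ e ∈ d.divisors, ∑ x : Fˣ with orderOf x = e, (x : F) = if d = 1 then 1 else 0 := by
    intro d hd hdN
    have hfilter :
        univ.filter (fun x : Fˣ ↦ orderOf x ∈ d.divisors) = univ.filter (· ^ d = 1) := by
      ext x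
      simp [Nat.mem_divisors, orderOf_dvd_iff_pow_eq_one, hd.ne']
    rw [Finset.sum_fiberwise_eq_sum_filter, hfilter]
    split_ifs with hd₁
    · subst hd₁
      simp [Finset.filter_eq']
    · exact sum_units_pow_eq_one_eq_zero F hdN hd₁
  have hinv := (ArithmeticFunction.sum_eq_iff_sum_mul_moebius_eq_on _
    (fun _ _ hmn hn ↦ hmn.trans hn)).mp hdiv _ Fintype.card_pos dvd_rfl
  rw [← hinv, Finset.sum_eq_single (Fintype.card Fˣ, 1)]
  · simp
  · rintro ⟨a, b⟩ hab hne
    rw [Nat.mem_divisorsAntidiagonal] at hab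
    rcases eq_or_ne b 1 with rfl | hb
    · exact absurd (by simpa using hab.1) hne
    · simp [hb]
  · simp

variable [CharP F 2]

theorem sq_add_self_ne_one (h3 : ¬ 3 ∣ Fintype.card Fˣ) (y : F) : y ^ 2 + y ≠ 1 := by
  intro hy
  have h2 : (2 : F) = 0 := CharTwo.two_eq_zero
  have hy0 : y ≠ 0 := by rintro rfl; simp at hy
  have hy1 : Units.mk0 y hy0 ≠ 1 := by
    intro h
    rw [Units.ext_iff, Units.val_mk0, Units.val_one] at h
    subst h
    exact one_ne_zero (by linear_combination -hy + h2)
  have hy3 : Units.mk0 y hy0 ^ 3 = 1 := by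
    ext
    simp only [Units.val_pow_eq_pow_val, Units.val_mk0, Units.val_one]
    linear_combination (y - 1) * hy + (y - 1) * h2
  exact h3 (orderOf_eq_prime hy3 hy1 ▸ orderOf_dvd_card)

theorem exists_orderOf_eq_card_units_forall_sq_add_self_ne_sq
    (hsf : Squarefree (Fintype.card Fˣ)) (h3 : ¬ 3 ∣ Fintype.card Fˣ) :
    ∃ v : Fˣ, orderOf v = Fintype.card Fˣ ∧ ∀ z : F, z ^ 2 + z ≠ (v : F) ^ 2 := by
  have h2 : (2 : F) = 0 := CharTwo.two_eq_zero
  by_contra! hcon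
  have hgen : ∀ v : Fˣ, orderOf v = Fintype.card Fˣ → ∃ y : F, y ^ 2 + y = v := by
    intro v hv
    obtain ⟨z, hz⟩ := hcon v hv
    obtain ⟨y, rfl⟩ := isSquare_of_char_two (ringChar.eq F 2) z
    refine ⟨y, sub_eq_zero.mp (pow_eq_zero_iff two_ne_zero |>.mp ?_)⟩
    linear_combination hz + (y ^ 3 - y ^ 2 * v - y * v + v ^ 2) * h2
  have hsum : ∃ y : F, y ^ 2 + y = ∑ x : Fˣ with orderOf x = Fintype.card Fˣ, (x : F) := by
    refine Finset.sum_induction _ (fun w : F ↦ ∃ y, y ^ 2 + y = w) ?_ ⟨0, by ring⟩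
      fun x hx ↦ hgen x (Finset.mem_filter.mp hx).2
    rintro _ _ ⟨y₁, rfl⟩ ⟨y₂, rfl⟩
    exact ⟨y₁ + y₂, by linear_combination y₁ * y₂ * h2⟩
  have hμ : (ArithmeticFunction.moebius (Fintype.card Fˣ) : F) = 1 := by
    rcases ArithmeticFunction.moebius_ne_zero_iff_eq_or.mp
      (ArithmeticFunction.moebius_ne_zero_iff_squarefree.mpr hsf) with h | h <;>
      simp [h, CharTwo.neg_eq]
  rw [sum_units_orderOf_eq_card_units, hμ] at hsum
  obtain ⟨y, hy⟩ := hsum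
  exact sq_add_self_ne_one F h3 y hy

end FiniteField

theorem Nat.not_three_dvd_two_pow_sub_one {n : ℕ} (hn : Odd n) : ¬ 3 ∣ 2 ^ n - 1 := by
  obtain ⟨w, rfl⟩ := hn
  have h : 2 ^ (2 * w + 1) % 3 = 2 := by
    rw [pow_succ, pow_mul, Nat.mul_mod, Nat.pow_mod]
    norm_num
  generalize 2 ^ (2 * w + 1) = m at h
  omega

theorem stmt19_general (n : ℕ) (hodd : Odd n) (hsf : Squarefree (2 ^ n - 1))
    (F : Type*) [Field F] [Fintype F] (hcard : Fintype.card F = 2 ^ n) :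
    ∃ l : List F, IsQuiddity l ∧ ¬ QuiddityReducible l ∧
      l.length = 3 * (2 ^ n - 1) := by
  classical
  have : CharP F 2 := charP_of_card_eq_prime_pow hcard
  have hunits : Fintype.card Fˣ = 2 ^ n - 1 := by rw [Fintype.card_units, hcard]
  obtain ⟨u, hu, hAS⟩ := FiniteField.exists_orderOf_eq_card_units_forall_sq_add_self_ne_sq F
    (hunits ▸ hsf) (hunits ▸ Nat.not_three_dvd_two_pow_sub_one hodd)
  have hv : ((u⁻¹ : Fˣ) : F) * u = 1 := by simp
  have hord : orderOf (u : F) = 2 ^ n - 1 := by rw [orderOf_units, hu, hunits]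
  refine ⟨triList (2 ^ n - 1) (u⁻¹ : Fˣ) u, isQuiddity_triList hv ?_,
    not_quiddityReducible_triList hv hord.ge hAS, triList_length _ _ _⟩
  rw [← hord, pow_orderOf_eq_one]

/-- for odd `n ≠ 1` with `2ⁿ − 1` squarefree, there is an irreducible
λ-quiddity over the field with `2ⁿ` elements of size `3·(2ⁿ − 1)`; in particular the
maximal size of irreducible λ-quiddities over this field is at least `3·(2ⁿ − 1)`. -/
theorem stmt19 (n : ℕ) (hn : n ≠ 1) (hodd : Odd n) (hsf : Squarefree (2 ^ n - 1))
    (F : Type*) [Field F] [Fintype F] (hcard : Fintype.card F = 2 ^ n) :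
    ∃ l : List F, IsQuiddity l ∧ ¬ QuiddityReducible l ∧
      l.length = 3 * (2 ^ n - 1) :=
  stmt19_general n hodd hsf F hcard
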